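/- arXiv:2408.02119 — 6 statements merged into one kernel-verified Lean document; each statement's English description precedes it below -/
import Mathlib

section
/- Let m ≤ d, let A be a real d × d matrix and R a real d × m matrix whose associated linear map ℝ^m → ℝ^d is injective. Assume: (i) the kernel of the linear map x ↦ A x equals the range of R; (ii) the kernel of A^d equals the kernel of A (i.e., the generalized eigenspace of the eigenvalue 0 equals the kernel); (iii) every root μ ∈ ℂ of the characteristic polynomial of A (regarded as a complex matrix) with μ ≠ 0 has nonzero real part. Then there exist a real d × (d − m) matrix N whose associated linear map is injective and a real (d − m) × (d − m) matrix L such that: (1) the range of R and the range of N are complementary subspaces of ℝ^d (their intersection is trivial and their sum is all of ℝ^d); (2) A · N = N · L as matrices; (3) every root of the characteristic polynomial of L over ℂ has nonzero real part (L is hyperbolic). -/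
open Matrix Module Polynomial

private lemma charpoly_isRoot_iff_exists' {n K : Type*} [Fintype n] [DecidableEq n] [Field K]
    (M : Matrix n n K) (μ : K) :
    M.charpoly.IsRoot μ ↔ ∃ v, v ≠ 0 ∧ M.mulVec v = μ • v := by
  have h1 : M.charpoly.eval μ = (μ • (1 : Matrix n n K) - M).det := by
    rw [Matrix.charpoly, ← Polynomial.coe_evalRingHom, RingHom.map_det]
    congr 1
    ext i j
    by_cases h : i = j <;>
      simp [h, Matrix.charmatrix_apply, Matrix.one_apply, Matrix.diagonal_apply]
  have h2 : ∀ v, (μ • (1 : Matrix n n K) - M).mulVec v = μ • v - M.mulVec v := by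
    intro v
    rw [Matrix.sub_mulVec, Matrix.smul_mulVec, Matrix.one_mulVec]
  constructor
  · intro hroot
    obtain ⟨v, hv, hveq⟩ := Matrix.exists_mulVec_eq_zero_iff.2 (by rw [← h1]; exact hroot)
    refine ⟨v, hv, ?_⟩
    rw [h2, sub_eq_zero] at hveq
    exact hveq.symm
  · rintro ⟨v, hv, hveq⟩
    have h0 : (μ • (1 : Matrix n n K) - M).mulVec v = 0 := by rw [h2, hveq, sub_self]
    have hdet := Matrix.exists_mulVec_eq_zero_iff.1 ⟨v, hv, h0⟩
    rwa [Polynomial.IsRoot, h1]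

private lemma mulVecLin_pow' {n : ℕ} (A : Matrix (Fin n) (Fin n) ℝ) (k : ℕ) :
    (A ^ k).mulVecLin = (A.mulVecLin ^ k : Module.End ℝ (Fin n → ℝ)) := by
  induction k with
  | zero => rw [pow_zero, pow_zero, Matrix.mulVecLin_one]; rfl
  | succ k ih => rw [pow_succ, pow_succ, Matrix.mulVecLin_mul, ih]; rfl

/-- Splitting of the linearization at a normally hyperbolic relative
equilibrium: if the kernel of `A` equals the range of `R`, the generalized eigenspace
of the eigenvalue `0` equals the kernel, and all nonzero complex eigenvalues of `A`
have nonzero real part, then there exist an injective `N` and a hyperbolic Floquet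
matrix `L` with `im R ⊕ im N = ℝ^d` and `A·N = N·L`. -/
theorem normal_hyperbolic_splitting
    (m d : ℕ) (hmd : m ≤ d)
    (A : Matrix (Fin d) (Fin d) ℝ)
    (R : Matrix (Fin d) (Fin m) ℝ)
    (hRinj : Function.Injective R.mulVecLin)
    (hker : LinearMap.ker A.mulVecLin = LinearMap.range R.mulVecLin)
    (hgen : LinearMap.ker (A ^ d).mulVecLin = LinearMap.ker A.mulVecLin)
    (hhyp : ∀ μ : ℂ, (A.map (fun x : ℝ => (x : ℂ))).charpoly.IsRoot μ → μ ≠ 0 → μ.re ≠ 0) :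
    ∃ (N : Matrix (Fin d) (Fin (d - m)) ℝ) (L : Matrix (Fin (d - m)) (Fin (d - m)) ℝ),
      Function.Injective N.mulVecLin ∧
      LinearMap.range R.mulVecLin ⊓ LinearMap.range N.mulVecLin = ⊥ ∧
      LinearMap.range R.mulVecLin ⊔ LinearMap.range N.mulVecLin = ⊤ ∧
      A * N = N * L ∧
      (∀ μ : ℂ, (L.map (fun x : ℝ => (x : ℂ))).charpoly.IsRoot μ → μ.re ≠ 0) := by
  classical
  have hfr : Module.finrank ℝ (Fin d → ℝ) = d := Module.finrank_fin_fun ℝ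
  set f : Module.End ℝ (Fin d → ℝ) := A.mulVecLin with hfdef
  have hgen' : LinearMap.ker (f ^ d) = LinearMap.ker f := by
    rw [← mulVecLin_pow']; exact hgen
  -- stabilization of kernels
  have hstab : LinearMap.ker (f ^ (d + d)) = LinearMap.ker (f ^ d) := by
    have h1 := Module.End.ker_pow_eq_ker_pow_finrank_of_le
      (f := f) (m := d + d) (by rw [hfr]; omega)
    have h2 := Module.End.ker_pow_eq_ker_pow_finrank_of_le
      (f := f) (m := d) (le_of_eq hfr)
    rw [h1, h2]
  set W : Submodule ℝ (Fin d → ℝ) := LinearMap.range (f ^ d) with hWdef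
  have hkerfd : LinearMap.ker (f ^ d) = LinearMap.range R.mulVecLin := by
    rw [hgen']; exact hker
  -- the intersection of kernel and range of f^d is trivial
  have hinf : LinearMap.ker (f ^ d) ⊓ W = ⊥ := by
    rw [Submodule.eq_bot_iff]
    rintro x ⟨hx1, y, rfl⟩
    have hy : y ∈ LinearMap.ker (f ^ (d + d)) := by
      rw [LinearMap.mem_ker, pow_add, Module.End.mul_apply]
      exact hx1
    rw [hstab, LinearMap.mem_ker] at hy
    exact hy
  -- dimension of W
  have hRrank : Module.finrank ℝ ↥(LinearMap.range R.mulVecLin) = m := by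
    rw [LinearMap.finrank_range_of_inj hRinj, Module.finrank_fin_fun]
  have hWfin : Module.finrank ℝ ↥W = d - m := by
    have h3 := LinearMap.finrank_range_add_finrank_ker (f ^ d)
    rw [hfr, ← hWdef] at h3
    rw [hkerfd, hRrank] at h3
    omega
  -- basis of W
  let b : Basis (Fin (d - m)) ℝ ↥W := Module.finBasisOfFinrankEq ℝ ↥W hWfin
  set N : Matrix (Fin d) (Fin (d - m)) ℝ :=
    Matrix.of fun (i : Fin d) (j : Fin (d - m)) => (b j : Fin d → ℝ) i with hNdef
  have hNlin : N.mulVecLin = W.subtype ∘ₗ (b.equivFun.symm : (Fin (d - m) → ℝ) ≃ₗ[ℝ] ↥W) := by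
    apply LinearMap.ext; intro v
    have : (b.equivFun.symm v : ↥W) = ∑ j, v j • b j := b.equivFun_symm_apply v
    funext i
    simp only [LinearMap.coe_comp, Function.comp_apply, LinearEquiv.coe_coe,
      Submodule.coe_subtype, this, Matrix.mulVecLin_apply]
    rw [Submodule.coe_sum]
    simp [Matrix.mulVec, dotProduct, hNdef, mul_comm]
  have hNinj : Function.Injective N.mulVecLin := by
    rw [hNlin]
    exact (Submodule.injective_subtype W).comp b.equivFun.symm.injective
  have hNrange : LinearMap.range N.mulVecLin = W := by
    rw [hNlin, LinearMap.range_comp, LinearEquiv.range, Submodule.map_subtype_top]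
  -- invariance of W
  have hWinv : ∀ x ∈ W, f x ∈ W := by
    rintro x ⟨y, rfl⟩
    refine ⟨f y, ?_⟩
    rw [← Module.End.mul_apply, ← Module.End.mul_apply, ← pow_succ, ← pow_succ']
  let f' : ↥W →ₗ[ℝ] ↥W := f.restrict hWinv
  set L : Matrix (Fin (d - m)) (Fin (d - m)) ℝ := LinearMap.toMatrix b b f' with hLdef
  -- the matrix identity
  have hANL : A * N = N * L := by
    ext i j
    have h5 : ((f' (b j) : ↥W) : Fin d → ℝ) = A.mulVec (b j : Fin d → ℝ) := by
      rw [LinearMap.restrict_apply]; rfl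
    have h6 : ((f' (b j) : ↥W) : Fin d → ℝ) = ∑ k, L k j • (b k : Fin d → ℝ) := by
      conv_lhs => rw [← b.sum_repr (f' (b j))]
      rw [Submodule.coe_sum]
      refine Finset.sum_congr rfl fun k _ => ?_
      simp [hLdef, LinearMap.toMatrix_apply]
    have hL : (A * N) i j = A.mulVec (b j : Fin d → ℝ) i := by
      simp [Matrix.mul_apply, Matrix.mulVec, dotProduct, hNdef]
    rw [hL, ← h5, h6]
    simp [Matrix.mul_apply, hNdef, Finset.sum_apply, mul_comm]
  -- f' is injective
  have hf'ker : LinearMap.ker f' = ⊥ := by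
    rw [Submodule.eq_bot_iff]
    intro w hw
    have hw0 : f (w : Fin d → ℝ) = 0 := by
      have := congrArg (Subtype.val) (LinearMap.mem_ker.mp hw)
      rwa [LinearMap.restrict_apply] at this
    have hmem : (w : Fin d → ℝ) ∈ LinearMap.ker (f ^ d) ⊓ W := by
      refine Submodule.mem_inf.mpr ⟨?_, w.2⟩
      rw [hgen']
      exact LinearMap.mem_ker.mpr hw0
    rw [hinf] at hmem
    exact Subtype.ext hmem
  have hdetL : L.det ≠ 0 := by
    have hu : IsUnit f' := (LinearMap.isUnit_iff_ker_eq_bot f').2 hf'ker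
    have h7 : IsUnit (LinearMap.det f') := LinearMap.isUnit_det f' hu
    rw [hLdef, LinearMap.det_toMatrix]
    exact isUnit_iff_ne_zero.1 h7
  -- left inverse of N
  obtain ⟨gl, hgl⟩ := (N.mulVecLin).exists_leftInverse_of_injective
    (LinearMap.ker_eq_bot.2 hNinj)
  have hMl : (LinearMap.toMatrix' gl) * N = 1 := by
    have h8 := congrArg LinearMap.toMatrix' hgl
    rwa [LinearMap.toMatrix'_comp, ← Matrix.toLin'_apply', LinearMap.toMatrix'_toLin',
      LinearMap.toMatrix'_id] at h8
  set Ml := LinearMap.toMatrix' gl with hMldef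
  have hcoe : (fun x : ℝ => (x : ℂ)) = ⇑(Complex.ofRealHom) := rfl
  set Nc : Matrix (Fin d) (Fin (d - m)) ℂ := N.map (fun x : ℝ => (x : ℂ)) with hNcdef
  have hNcinj : ∀ u : Fin (d - m) → ℂ, Nc.mulVec u = 0 → u = 0 := by
    intro u hu
    have h9 : (Ml.map (fun x : ℝ => (x : ℂ))) * Nc = 1 := by
      rw [hNcdef, hcoe, ← Matrix.map_mul, hMl]
      ext i j
      by_cases h : i = j <;> simp [h, Matrix.one_apply]
    calc u = ((Ml.map (fun x : ℝ => (x : ℂ))) * Nc).mulVec u := by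
              rw [h9, Matrix.one_mulVec]
      _ = (Ml.map (fun x : ℝ => (x : ℂ))).mulVec (Nc.mulVec u) := by
              rw [Matrix.mulVec_mulVec]
      _ = 0 := by rw [hu, Matrix.mulVec_zero]
  refine ⟨N, L, hNinj, ?_, ?_, hANL, ?_⟩
  · rw [hNrange, ← hkerfd]
    exact hinf
  · -- sup is top
    apply Submodule.eq_top_of_finrank_eq
    rw [hNrange]
    have hinfW : LinearMap.range R.mulVecLin ⊓ W = ⊥ := by
      rw [← hkerfd]; exact hinf
    have h10 := Submodule.finrank_sup_add_finrank_inf_eq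
      (LinearMap.range R.mulVecLin) W
    rw [hinfW] at h10
    simp only [finrank_bot, add_zero] at h10
    rw [h10, hRrank, hWfin, hfr]
    omega
  · intro μ hroot
    obtain ⟨v, hv, hveq⟩ := (charpoly_isRoot_iff_exists' _ μ).1 hroot
    have hAcNc : (A.map (fun x : ℝ => (x : ℂ))) * Nc = Nc * (L.map (fun x : ℝ => (x : ℂ))) := by
      rw [hNcdef, hcoe, ← Matrix.map_mul, ← Matrix.map_mul, hANL]
    have heig : (A.map (fun x : ℝ => (x : ℂ))).mulVec (Nc.mulVec v) = μ • Nc.mulVec v := by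
      rw [Matrix.mulVec_mulVec, hAcNc, ← Matrix.mulVec_mulVec, hveq, Matrix.mulVec_smul]
    have hw : Nc.mulVec v ≠ 0 := fun h => hv (hNcinj v h)
    have hrootA : (A.map (fun x : ℝ => (x : ℂ))).charpoly.IsRoot μ :=
      (charpoly_isRoot_iff_exists' _ μ).2 ⟨_, hw, heig⟩
    refine hhyp μ hrootA ?_
    intro hμ
    subst hμ
    have hdet0 : (L.map (fun x : ℝ => (x : ℂ))).det = 0 := by
      apply Matrix.exists_mulVec_eq_zero_iff.1
      exact ⟨v, hv, by rw [hveq]; simp⟩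
    rw [hcoe, ← RingHom.mapMatrix_apply, ← RingHom.map_det] at hdet0
    apply hdetL
    have : ((L.det : ℝ) : ℂ) = 0 := hdet0
    exact_mod_cast this
end

section
/- Let L be a real p × p matrix all of whose complex eigenvalues (roots of its characteristic polynomial over ℂ) have nonzero real part, and let Ω ∈ ℝ^m. Let V : ℝ^m → ℝ^p be a trigonometric polynomial, i.e., V(φ) = Σ_{k ∈ F} (a_k · cos⟨k, φ⟩ + b_k · sin⟨k, φ⟩) for a finite set F ⊂ ℤ^m and vectors a_k, b_k ∈ ℝ^p, where ⟨k, φ⟩ = k₁φ₁ + ⋯ + k_mφ_m. Then there exists a trigonometric polynomial Y : ℝ^m → ℝ^p (of the same form, with frequencies in F) such that for all φ ∈ ℝ^m, (fderiv ℝ Y φ)(Ω) − L · Y(φ) = V(φ). -/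
/-!
Write the unknown mode by mode as `Y_k(φ) = cos⟨k,φ⟩ x_k + sin⟨k,φ⟩ y_k = Re(z_k e^{-i⟨k,φ⟩})`
with `z_k = x_k + i y_k`. Differentiation along `Ω` multiplies `e^{-i⟨k,φ⟩}` by `-iω_k`,
`ω_k = ⟨k,Ω⟩`, so the equation decouples into `(-iω_k - L) z_k = a_k + i b_k`. Since `-iω_k`
is purely imaginary and `L` is hyperbolic, it is not an eigenvalue of `L`, so each of these
systems is solvable.
-/

open Matrix

theorem Matrix.exists_scalar_sub_mulVec_eq_of_not_isRoot_charpoly {n K : Type*} [Fintype n]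
    [DecidableEq n] [Field K] {M : Matrix n n K} {μ : K} (hμ : ¬ M.charpoly.IsRoot μ)
    (v : n → K) : ∃ z, (scalar n μ - M) *ᵥ z = v := by
  refine mulVec_surjective_iff_isUnit.2 ?_ v
  rw [isUnit_iff_isUnit_det, isUnit_iff_ne_zero, ← eval_charpoly]
  exact hμ

theorem Matrix.re_map_ofReal_mulVec {n : Type*} [Fintype n] (L : Matrix n n ℝ) (z : n → ℂ)
    (i : n) : ((L.map (↑) *ᵥ z) i).re = (L *ᵥ fun j => (z j).re) i := by
  simp [mulVec, dotProduct, Complex.re_sum]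

theorem Matrix.im_map_ofReal_mulVec {n : Type*} [Fintype n] (L : Matrix n n ℝ) (z : n → ℂ)
    (i : n) : ((L.map (↑) *ᵥ z) i).im = (L *ᵥ fun j => (z j).im) i := by
  simp [mulVec, dotProduct, Complex.im_sum]

/-- The real and imaginary parts of `(-iω - L) (x + i y) = a + i b`. -/
theorem Matrix.exists_smul_sub_mulVec_of_not_isRoot_charpoly {n : Type*} [Fintype n]
    [DecidableEq n] (L : Matrix n n ℝ) (ω : ℝ)
    (hω : ¬ (L.map ((↑) : ℝ → ℂ)).charpoly.IsRoot (-(ω * Complex.I))) (a b : n → ℝ) :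
    ∃ x y : n → ℝ, ω • y - L *ᵥ x = a ∧ -(ω • x) - L *ᵥ y = b := by
  obtain ⟨z, hz⟩ := exists_scalar_sub_mulVec_eq_of_not_isRoot_charpoly hω fun i => ⟨a i, b i⟩
  refine ⟨fun i => (z i).re, fun i => (z i).im, ?_, ?_⟩ <;> ext i
  · simpa [sub_mulVec, re_map_ofReal_mulVec] using congrArg Complex.re (congrFun hz i)
  · simpa [sub_mulVec, im_map_ofReal_mulVec] using congrArg Complex.im (congrFun hz i)

section TrigPoly

variable {m : ℕ} {E : Type*} [NormedAddCommGroup E] [NormedSpace ℝ E]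

noncomputable def trigPoly (F : Finset (Fin m → ℤ)) (a b : (Fin m → ℤ) → E) (φ : Fin m → ℝ) :
    E :=
  ∑ k ∈ F, (Real.cos (∑ i, (k i : ℝ) * φ i) • a k + Real.sin (∑ i, (k i : ℝ) * φ i) • b k)

theorem trigPoly_sub (F : Finset (Fin m → ℤ)) (a b c d : (Fin m → ℤ) → E) (φ : Fin m → ℝ) :
    trigPoly F a b φ - trigPoly F c d φ = trigPoly F (a - c) (b - d) φ := by
  simp only [trigPoly, ← Finset.sum_sub_distrib, Pi.sub_apply, smul_sub]
  congr! 1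
  abel

theorem map_trigPoly {G : Type*} [NormedAddCommGroup G] [NormedSpace ℝ G] (T : E →ₗ[ℝ] G)
    (F : Finset (Fin m → ℤ)) (a b : (Fin m → ℤ) → E) (φ : Fin m → ℝ) :
    T (trigPoly F a b φ) = trigPoly F (T ∘ a) (T ∘ b) φ := by
  simp [trigPoly]

theorem hasFDerivAt_sum_intCast_mul (k : Fin m → ℤ) (φ : Fin m → ℝ) :
    HasFDerivAt (fun ψ : Fin m → ℝ => ∑ i, (k i : ℝ) * ψ i)
      (∑ i, (k i : ℝ) • (ContinuousLinearMap.proj i : (Fin m → ℝ) →L[ℝ] ℝ)) φ :=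
  HasFDerivAt.fun_sum fun i _ => (hasFDerivAt_apply i φ).const_mul _

theorem fderiv_trigPoly_apply (F : Finset (Fin m → ℤ)) (a b : (Fin m → ℤ) → E)
    (φ Ω : Fin m → ℝ) :
    fderiv ℝ (trigPoly F a b) φ Ω =
      trigPoly F (fun k => (∑ i, (k i : ℝ) * Ω i) • b k)
        (fun k => -((∑ i, (k i : ℝ) * Ω i) • a k)) φ := by
  have h : HasFDerivAt (trigPoly F a b) _ φ := HasFDerivAt.fun_sum fun k _ =>
    ((hasFDerivAt_sum_intCast_mul k φ).cos.smul_const (a k)).fun_add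
      ((hasFDerivAt_sum_intCast_mul k φ).sin.smul_const (b k))
  rw [h.fderiv]
  simp only [trigPoly, _root_.sum_apply, _root_.add_apply, ContinuousLinearMap.smulRight_apply,
    _root_.smul_apply, ContinuousLinearMap.proj_apply, smul_eq_mul]
  refine Finset.sum_congr rfl fun k _ => ?_
  module

end TrigPoly

/-- Solvability of the normal homological equation `(∂_Ω − L)Y = V` for
hyperbolic `L` and trigonometric-polynomial right-hand side `V` with frequencies in a
finite set `F ⊂ ℤ^m`; the solution `Y` is a trigonometric polynomial with frequencies
in `F` as well. -/
theorem normal_homological_equation_solvable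
    (p m : ℕ)
    (L : Matrix (Fin p) (Fin p) ℝ)
    (hL : ∀ μ : ℂ, (L.map (fun x : ℝ => (x : ℂ))).charpoly.IsRoot μ → μ.re ≠ 0)
    (Ω : Fin m → ℝ)
    (F : Finset (Fin m → ℤ))
    (a b : (Fin m → ℤ) → (Fin p → ℝ))
    (V : (Fin m → ℝ) → (Fin p → ℝ))
    (hV : ∀ φ, V φ = ∑ k ∈ F,
      (Real.cos (∑ i, (k i : ℝ) * φ i) • a k + Real.sin (∑ i, (k i : ℝ) * φ i) • b k)) :
    ∃ a' b' : (Fin m → ℤ) → (Fin p → ℝ),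
      ∀ φ : Fin m → ℝ,
        (fderiv ℝ (fun ψ => ∑ k ∈ F,
          (Real.cos (∑ i, (k i : ℝ) * ψ i) • a' k + Real.sin (∑ i, (k i : ℝ) * ψ i) • b' k)) φ) Ω
        - L.mulVec (∑ k ∈ F,
          (Real.cos (∑ i, (k i : ℝ) * φ i) • a' k + Real.sin (∑ i, (k i : ℝ) * φ i) • b' k))
        = V φ := by
  choose x y hx hy using fun k : Fin m → ℤ =>
    L.exists_smul_sub_mulVec_of_not_isRoot_charpoly (∑ i, (k i : ℝ) * Ω i)
      (fun h => hL _ h (by simp)) (a k) (b k)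
  refine ⟨x, y, fun φ => ?_⟩
  rw [hV]
  change fderiv ℝ (trigPoly F x y) φ Ω - L.mulVecLin (trigPoly F x y φ) = trigPoly F a b φ
  rw [fderiv_trigPoly_apply, map_trigPoly, trigPoly_sub]
  congr 1 <;> funext k
  exacts [hx k, hy k]
end

section
/- For the three-population Kuramoto model, the synchrony pattern SDD is a relative equilibrium: for all φ ∈ ℝ³, H(E^SDD(φ)) = R(ω + 1, ω − 1, ω − 1), where E^SDD(φ) = (φ₁, φ₁, φ₂, φ₂ + π, φ₃, φ₃ + π). In particular, in the co-rotating frame ω = −1 the frequency vector is Ω^SDD = (0, −2, −2). -/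
open Real

/-- Pairwise within-population coupling `g₂(ϑ) = sin(ϑ + π/2) − r₀ sin(2(ϑ + π/2))`. -/
noncomputable def g2 (r0 ϑ : ℝ) : ℝ :=
  Real.sin (ϑ + π / 2) - r0 * Real.sin (2 * (ϑ + π / 2))

/-- Nonpairwise coupling `g₄(ϑ) = sin(ϑ + π)`. -/
noncomputable def g4 (ϑ : ℝ) : ℝ := Real.sin (ϑ + π)

/-- `G₄(θ_τ; ϕ) = (1/4) Σ_{p,q} g₄(θ_{τ,p} − θ_{τ,q} + ϕ)`. -/
noncomputable def G4 (θτ : Fin 2 → ℝ) (ϕ : ℝ) : ℝ :=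
  (1 / 4) * ∑ p : Fin 2, ∑ q : Fin 2, g4 (θτ p - θτ q + ϕ)

/-- The vector field of the three-population Kuramoto model: a state is
`θ : Fin 3 → Fin 2 → ℝ` (population `σ`, oscillator `k`), and
`H_{σ,k}(θ) = ω + g₂(θ_{σ,3−k} − θ_{σ,k}) − K G₄(θ_{σ−1}; θ_{σ,3−k} − θ_{σ,k})
  + K G₄(θ_{σ+1}; θ_{σ,3−k} − θ_{σ,k})`,
with population indices mod 3 and the other oscillator indexed by `k + 1` mod 2. -/
noncomputable def kuramotoH (ω K r0 : ℝ) (θ : Fin 3 → Fin 2 → ℝ) : Fin 3 → Fin 2 → ℝ :=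
  fun σ k =>
    ω + g2 r0 (θ σ (k + 1) - θ σ k)
      - K * G4 (θ (σ - 1)) (θ σ (k + 1) - θ σ k)
      + K * G4 (θ (σ + 1)) (θ σ (k + 1) - θ σ k)

/-- The phase-shift action `R : ℝ³ → ℝ⁶`, `Rφ = (φ₁, φ₁, φ₂, φ₂, φ₃, φ₃)`. -/
def kuramotoR (φ : Fin 3 → ℝ) : Fin 3 → Fin 2 → ℝ := fun σ _ => φ σ

/-- The embedding of the SDD torus: `E^SDD(φ) = (φ₁, φ₁, φ₂, φ₂+π, φ₃, φ₃+π)`. -/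
noncomputable def ESDD (φ : Fin 3 → ℝ) : Fin 3 → Fin 2 → ℝ :=
  fun σ k => φ σ + if σ ≠ 0 ∧ k = 1 then π else 0

/-- The synchrony pattern SDD is a relative equilibrium of the
three-population Kuramoto model: `H(E^SDD(φ)) = R(ω+1, ω−1, ω−1)` for all `φ ∈ ℝ³`.
In particular, for `ω = −1` the frequency vector is `Ω^SDD = (0, −2, −2)`. -/
theorem kuramoto_SDD_relative_equilibrium (ω K r0 : ℝ) :
    ∀ φ : Fin 3 → ℝ,
      kuramotoH ω K r0 (ESDD φ) = kuramotoR ![ω + 1, ω - 1, ω - 1] := by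
  intro φ
  funext σ k
  fin_cases σ <;> fin_cases k <;>
    simp [kuramotoH, kuramotoR, ESDD, G4, g2, g4, Fin.sum_univ_two, Fin.isValue] <;>
    ring_nf <;>
    simp [show π*(3/2)=π+π/2 from by ring, show π*3=π+2*π from by ring,
      show π*(-1/2)=-(π/2) from by ring, sin_add, sin_neg] <;> ring
end

section
/- For the three-population Kuramoto model, the Floquet matrix of the torus SDD is L^SDD = diag(−4r₀, −4r₀ + 2K, −4r₀ − 2K): with θ₀ = E^SDD(0) = (0, 0, 0, π, 0, π) and N : ℝ³ → ℝ⁶ given by N v = (−v₁, v₁, −v₂, v₂, −v₃, v₃), one has (fderiv ℝ H θ₀)(N v) = N(L^SDD v) for all v ∈ ℝ³, i.e., (fderiv ℝ H θ₀)(N v) = N(−4r₀ v₁, (−4r₀ + 2K) v₂, (−4r₀ − 2K) v₃). -/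
open Real

/-- The normal directions: `N v = (−v₁, v₁, −v₂, v₂, −v₃, v₃)`. -/
def kuramotoN (v : Fin 3 → ℝ) : Fin 3 → Fin 2 → ℝ :=
  fun σ k => if k = 0 then -v σ else v σ

/-- The restriction of a component of `H` to the line `θ₀ + t N v`, abstractly. -/
noncomputable def KMfun (ω K r0 e a b am bm ap bp : ℝ) : ℝ → ℝ := fun t =>
  ω + (Real.sin (e*(b+2*a*t) + π/2) - r0 * Real.sin (2*(e*(b+2*a*t)+π/2)))
    - K * ((1/4) * (Real.sin (e*(b+2*a*t)+π)
        + Real.sin (-(bm+2*am*t) + e*(b+2*a*t) + π)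
        + Real.sin ((bm+2*am*t) + e*(b+2*a*t) + π)
        + Real.sin (e*(b+2*a*t)+π)))
    + K * ((1/4) * (Real.sin (e*(b+2*a*t)+π)
        + Real.sin (-(bp+2*ap*t) + e*(b+2*a*t) + π)
        + Real.sin ((bp+2*ap*t) + e*(b+2*a*t) + π)
        + Real.sin (e*(b+2*a*t)+π)))

/-- Its derivative at `t = 0`. -/
noncomputable def KMval (K r0 e a b am bm ap bp : ℝ) : ℝ :=
  (Real.cos (e*b + π/2) * (e*(2*a)) - r0 * (Real.cos (2*(e*b+π/2)) * (2*(e*(2*a)))))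
    - K * ((1/4) * (Real.cos (e*b+π) * (e*(2*a))
        + Real.cos (-bm + e*b + π) * (-(2*am) + e*(2*a))
        + Real.cos (bm + e*b + π) * ((2*am) + e*(2*a))
        + Real.cos (e*b+π) * (e*(2*a))))
    + K * ((1/4) * (Real.cos (e*b+π) * (e*(2*a))
        + Real.cos (-bp + e*b + π) * (-(2*ap) + e*(2*a))
        + Real.cos (bp + e*b + π) * ((2*ap) + e*(2*a))
        + Real.cos (e*b+π) * (e*(2*a))))

lemma kuramoto_master (ω K r0 e a b am bm ap bp : ℝ) :
    HasDerivAt (KMfun ω K r0 e a b am bm ap bp) (KMval K r0 e a b am bm ap bp) 0 := by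
  unfold KMfun KMval
  have hid : HasDerivAt (fun t : ℝ => t) 1 0 := hasDerivAt_id 0
  have hlin : ∀ c d : ℝ, HasDerivAt (fun t : ℝ => c + 2*d*t) (2*d) 0 := by
    intro c d
    simpa using ((hid.const_mul (2*d)).const_add c)
  have hϕ : HasDerivAt (fun t : ℝ => e*(b+2*a*t)) (e*(2*a)) 0 := (hlin b a).const_mul e
  have h0 : (fun t : ℝ => e*(b+2*a*t)) 0 = e*b := by norm_num
  have t1 : HasDerivAt (fun t : ℝ => Real.sin (e*(b+2*a*t) + π/2))
      (Real.cos (e*b + π/2) * (e*(2*a))) 0 := by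
    simpa [h0] using (hϕ.add_const (π/2)).sin
  have t2 : HasDerivAt (fun t : ℝ => Real.sin (2*(e*(b+2*a*t)+π/2)))
      (Real.cos (2*(e*b+π/2)) * (2*(e*(2*a)))) 0 := by
    simpa [h0] using ((hϕ.add_const (π/2)).const_mul 2).sin
  have t3 : HasDerivAt (fun t : ℝ => Real.sin (e*(b+2*a*t)+π))
      (Real.cos (e*b+π) * (e*(2*a))) 0 := by
    simpa [h0] using (hϕ.add_const π).sin
  have t4 : ∀ c d : ℝ, HasDerivAt (fun t : ℝ => Real.sin (-(c+2*d*t) + e*(b+2*a*t) + π))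
      (Real.cos (-c + e*b + π) * (-(2*d) + e*(2*a))) 0 := by
    intro c d
    have h : HasDerivAt (fun t : ℝ => -(c+2*d*t) + e*(b+2*a*t) + π) (-(2*d) + e*(2*a)) 0 :=
      (((hlin c d).neg).add hϕ).add_const π
    simpa [h0] using h.sin
  have t5 : ∀ c d : ℝ, HasDerivAt (fun t : ℝ => Real.sin ((c+2*d*t) + e*(b+2*a*t) + π))
      (Real.cos (c + e*b + π) * ((2*d) + e*(2*a))) 0 := by
    intro c d
    have h : HasDerivAt (fun t : ℝ => (c+2*d*t) + e*(b+2*a*t) + π) ((2*d) + e*(2*a)) 0 :=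
      ((hlin c d).add hϕ).add_const π
    simpa [h0] using h.sin
  exact ((((t1.sub (t2.const_mul r0)).const_add ω).sub
      ((((t3.add (t4 bm am)).add (t5 bm am)).add t3).const_mul (1/4) |>.const_mul K)).add
      ((((t3.add (t4 bp ap)).add (t5 bp ap)).add t3).const_mul (1/4) |>.const_mul K))

/-- The Floquet matrix of the torus SDD is
`L^SDD = diag(−4r₀, −4r₀ + 2K, −4r₀ − 2K)`: with `θ₀ = E^SDD(0) = (0,0,0,π,0,π)`,
the Jacobian of `H` at `θ₀` satisfies `DH(θ₀)(N v) = N(L^SDD v)` for all `v ∈ ℝ³`. -/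
theorem kuramoto_SDD_floquet (ω K r0 : ℝ) :
    ∀ v : Fin 3 → ℝ,
      (fderiv ℝ (kuramotoH ω K r0) (ESDD 0)) (kuramotoN v)
        = kuramotoN ![(-4 * r0) * v 0, (-4 * r0 + 2 * K) * v 1, (-4 * r0 - 2 * K) * v 2] := by
  intro v
  have hd : ∀ (σ : Fin 3) (k : Fin 2) (x : Fin 3 → Fin 2 → ℝ),
      DifferentiableAt ℝ (fun θ => kuramotoH ω K r0 θ σ k) x := by
    intro σ k x; unfold kuramotoH g2 G4 g4; fun_prop
  have key : ∀ σ k, (fderiv ℝ (kuramotoH ω K r0) (ESDD 0)) (kuramotoN v) σ k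
      = fderiv ℝ (fun θ => kuramotoH ω K r0 θ σ k) (ESDD 0) (kuramotoN v) := by
    intro σ k
    have h1 : fderiv ℝ (kuramotoH ω K r0) (ESDD 0)
        = ContinuousLinearMap.pi
            (fun σ => fderiv ℝ (fun θ => kuramotoH ω K r0 θ σ) (ESDD 0)) :=
      fderiv_pi (fun σ => differentiableAt_pi.mpr (fun k => hd σ k _))
    have h2 : fderiv ℝ (fun θ => kuramotoH ω K r0 θ σ) (ESDD 0)
        = ContinuousLinearMap.pi
            (fun k => fderiv ℝ (fun θ => kuramotoH ω K r0 θ σ k) (ESDD 0)) :=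
      fderiv_pi (fun k => hd σ k _)
    rw [h1]; simp [h2]
  have hline : HasDerivAt (fun t : ℝ => ESDD 0 + t • kuramotoN v) (kuramotoN v) 0 := by
    rw [hasDerivAt_pi]; intro σ; rw [hasDerivAt_pi]; intro k
    simpa using ((hasDerivAt_id (0:ℝ)).mul_const (kuramotoN v σ k)).const_add (ESDD 0 σ k)
  have hzero : ESDD 0 + (0:ℝ) • kuramotoN v = ESDD 0 := by simp
  have comp : ∀ (σ : Fin 3) (k : Fin 2) (e a b am bm ap bp : ℝ),
      (fun t : ℝ => kuramotoH ω K r0 (ESDD 0 + t • kuramotoN v) σ k)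
        = KMfun ω K r0 e a b am bm ap bp →
      fderiv ℝ (fun θ => kuramotoH ω K r0 θ σ k) (ESDD 0) (kuramotoN v)
        = KMval K r0 e a b am bm ap bp := by
    intro σ k e a b am bm ap bp heq
    have h := ((hd σ k (ESDD 0 + (0:ℝ) • kuramotoN v)).hasFDerivAt).comp_hasDerivAt 0 hline
    rw [hzero] at h
    simp only [Function.comp_def] at h
    rw [heq] at h
    exact h.unique (kuramoto_master ω K r0 e a b am bm ap bp)
  have kc1 : Real.cos (π+π) = 1 := by rw [show π+π = 2*π by ring, Real.cos_two_pi]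
  have kc2 : Real.cos (2*(π/2)) = -1 := by rw [show 2*(π/2) = π by ring, Real.cos_pi]
  have kc3 : Real.cos (π+π/2) = 0 := by
    rw [Real.cos_add, Real.cos_pi_div_two, Real.sin_pi_div_two]; simp
  have kc4 : Real.cos (2*(π+π/2)) = -1 := by
    rw [show 2*(π+π/2) = 2*π + π by ring, Real.cos_add, Real.cos_two_pi, Real.sin_two_pi]
    simp
  have kc5 : Real.cos (-π+π/2) = 0 := by
    rw [show -π+π/2 = -(π/2) by ring, Real.cos_neg, Real.cos_pi_div_two]
  have kc6 : Real.cos (2*(-π+π/2)) = -1 := by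
    rw [show 2*(-π+π/2) = -π by ring, Real.cos_neg, Real.cos_pi]
  have c00 : fderiv ℝ (fun θ => kuramotoH ω K r0 θ 0 0) (ESDD 0) (kuramotoN v)
      = KMval K r0 1 (v 0) 0 (v 2) π (v 1) π := by
    refine comp 0 0 _ _ _ _ _ _ _ ?_
    funext t
    simp [kuramotoH, g2, G4, g4, ESDD, kuramotoN, KMfun, Fin.sum_univ_two, show (0:Fin 3)-1 = 2 from rfl, show (0:Fin 3)+1 = 1 from rfl, show (0:Fin 2)+1 = 1 from rfl]
    ring_nf
  have v00 : KMval K r0 1 (v 0) 0 (v 2) π (v 1) π = 4*r0*v 0 := by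
    norm_num [KMval, Real.cos_pi_div_two, Real.cos_pi, kc1, kc2, kc3, kc4, kc5, kc6]
    ring
  have c01 : fderiv ℝ (fun θ => kuramotoH ω K r0 θ 0 1) (ESDD 0) (kuramotoN v)
      = KMval K r0 (-1) (v 0) 0 (v 2) π (v 1) π := by
    refine comp 0 1 _ _ _ _ _ _ _ ?_
    funext t
    simp [kuramotoH, g2, G4, g4, ESDD, kuramotoN, KMfun, Fin.sum_univ_two, show (0:Fin 3)-1 = 2 from rfl, show (0:Fin 3)+1 = 1 from rfl, show (1:Fin 2)+1 = 0 from rfl]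
    ring_nf
  have v01 : KMval K r0 (-1) (v 0) 0 (v 2) π (v 1) π = -(4*r0*v 0) := by
    norm_num [KMval, Real.cos_pi_div_two, Real.cos_pi, kc1, kc2, kc3, kc4, kc5, kc6]
    ring
  have c10 : fderiv ℝ (fun θ => kuramotoH ω K r0 θ 1 0) (ESDD 0) (kuramotoN v)
      = KMval K r0 1 (v 1) π (v 0) 0 (v 2) π := by
    refine comp 1 0 _ _ _ _ _ _ _ ?_
    funext t
    simp [kuramotoH, g2, G4, g4, ESDD, kuramotoN, KMfun, Fin.sum_univ_two, show (1:Fin 3)-1 = 0 from rfl, show (1:Fin 3)+1 = 2 from rfl, show (0:Fin 2)+1 = 1 from rfl]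
    ring_nf
  have v10 : KMval K r0 1 (v 1) π (v 0) 0 (v 2) π = (4*r0-2*K)*v 1 := by
    norm_num [KMval, Real.cos_pi_div_two, Real.cos_pi, kc1, kc2, kc3, kc4, kc5, kc6]
    ring
  have c11 : fderiv ℝ (fun θ => kuramotoH ω K r0 θ 1 1) (ESDD 0) (kuramotoN v)
      = KMval K r0 (-1) (v 1) π (v 0) 0 (v 2) π := by
    refine comp 1 1 _ _ _ _ _ _ _ ?_
    funext t
    simp [kuramotoH, g2, G4, g4, ESDD, kuramotoN, KMfun, Fin.sum_univ_two, show (1:Fin 3)-1 = 0 from rfl, show (1:Fin 3)+1 = 2 from rfl, show (1:Fin 2)+1 = 0 from rfl]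
    ring_nf
  have v11 : KMval K r0 (-1) (v 1) π (v 0) 0 (v 2) π = -((4*r0-2*K)*v 1) := by
    norm_num [KMval, Real.cos_pi_div_two, Real.cos_pi, kc1, kc2, kc3, kc4, kc5, kc6]
    ring
  have c20 : fderiv ℝ (fun θ => kuramotoH ω K r0 θ 2 0) (ESDD 0) (kuramotoN v)
      = KMval K r0 1 (v 2) π (v 1) π (v 0) 0 := by
    refine comp 2 0 _ _ _ _ _ _ _ ?_
    funext t
    simp [kuramotoH, g2, G4, g4, ESDD, kuramotoN, KMfun, Fin.sum_univ_two, show (2:Fin 3)-1 = 1 from rfl, show (2:Fin 3)+1 = 0 from rfl, show (0:Fin 2)+1 = 1 from rfl]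
    ring_nf
  have v20 : KMval K r0 1 (v 2) π (v 1) π (v 0) 0 = (4*r0+2*K)*v 2 := by
    norm_num [KMval, Real.cos_pi_div_two, Real.cos_pi, kc1, kc2, kc3, kc4, kc5, kc6]
    ring
  have c21 : fderiv ℝ (fun θ => kuramotoH ω K r0 θ 2 1) (ESDD 0) (kuramotoN v)
      = KMval K r0 (-1) (v 2) π (v 1) π (v 0) 0 := by
    refine comp 2 1 _ _ _ _ _ _ _ ?_
    funext t
    simp [kuramotoH, g2, G4, g4, ESDD, kuramotoN, KMfun, Fin.sum_univ_two, show (2:Fin 3)-1 = 1 from rfl, show (2:Fin 3)+1 = 0 from rfl, show (1:Fin 2)+1 = 0 from rfl]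
    ring_nf
  have v21 : KMval K r0 (-1) (v 2) π (v 1) π (v 0) 0 = -((4*r0+2*K)*v 2) := by
    norm_num [KMval, Real.cos_pi_div_two, Real.cos_pi, kc1, kc2, kc3, kc4, kc5, kc6]
    ring
  funext σ k
  rw [key σ k]
  fin_cases σ <;> fin_cases k
  · show fderiv ℝ (fun θ => kuramotoH ω K r0 θ 0 0) (ESDD 0) (kuramotoN v) = -((-4*r0)*v 0)
    rw [c00, v00]; ring
  · show fderiv ℝ (fun θ => kuramotoH ω K r0 θ 0 1) (ESDD 0) (kuramotoN v) = (-4*r0)*v 0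
    rw [c01, v01]; ring
  · show fderiv ℝ (fun θ => kuramotoH ω K r0 θ 1 0) (ESDD 0) (kuramotoN v) = -((-4*r0+2*K)*v 1)
    rw [c10, v10]; ring
  · show fderiv ℝ (fun θ => kuramotoH ω K r0 θ 1 1) (ESDD 0) (kuramotoN v) = (-4*r0+2*K)*v 1
    rw [c11, v11]; ring
  · show fderiv ℝ (fun θ => kuramotoH ω K r0 θ 2 0) (ESDD 0) (kuramotoN v) = -((-4*r0-2*K)*v 2)
    rw [c20, v20]; ring
  · show fderiv ℝ (fun θ => kuramotoH ω K r0 θ 2 1) (ESDD 0) (kuramotoN v) = (-4*r0-2*K)*v 2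
    rw [c21, v21]; ring
end

section
/- For the three-population Kuramoto model, the Floquet matrix of the torus SSD is L^SSD = diag(−4r₀ + 2K, −4r₀ − 2K, −4r₀): with θ₀ = E^SSD(0) = (0, 0, 0, 0, 0, π) and N : ℝ³ → ℝ⁶ given by N v = (−v₁, v₁, −v₂, v₂, −v₃, v₃), one has (fderiv ℝ H θ₀)(N v) = N((−4r₀ + 2K) v₁, (−4r₀ − 2K) v₂, −4r₀ v₃) for all v ∈ ℝ³. -/
open Real

/-- The embedding of the SSD torus: `E^SSD(φ) = (φ₁, φ₁, φ₂, φ₂, φ₃, φ₃+π)`. -/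
noncomputable def ESSD (φ : Fin 3 → ℝ) : Fin 3 → Fin 2 → ℝ :=
  fun σ k => φ σ + if σ = 2 ∧ k = 1 then π else 0

/-! For two oscillators, `G₄(θ_τ; ϕ) = -sin ϕ (1 + cos d_τ) / 2` with `d_τ = θ_{τ,2} − θ_{τ,1}`, so
`H` depends on `θ` only through the phase differences `d_τ`, which move at speed `2 v_τ` along
`N v`. Where every `sin d_τ` vanishes, all sine factors drop out of the derivative, which becomes
diagonal: `N v ↦ N μ` with `μ_σ = -(4 r₀ + K cos d_σ (cos d_{σ-1} − cos d_{σ+1})) v_σ`.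
At `E^SSD(0)` one has `d = (0, 0, π)`. -/

lemma G4_eq (θτ : Fin 2 → ℝ) (ϕ : ℝ) :
    G4 θτ ϕ = -(sin ϕ * (1 + cos (θτ 1 - θτ 0))) / 2 := by
  have h : θτ 0 - θτ 1 = -(θτ 1 - θτ 0) := by ring
  simp only [G4, g4, Fin.sum_univ_two, sin_add_pi, sub_self, zero_add, h]
  simp only [neg_add_eq_sub, sin_sub, sin_add]
  ring

lemma g2_eq (r0 ϑ : ℝ) : g2 r0 ϑ = cos ϑ + r0 * sin (2 * ϑ) := by
  rw [g2, sin_add_pi_div_two, mul_add, mul_div_cancel₀ π two_ne_zero, sin_add_pi]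
  ring

lemma hasDerivAt_g2 (r0 ϑ : ℝ) : HasDerivAt (g2 r0) (-sin ϑ + 2 * r0 * cos (2 * ϑ)) ϑ := by
  rw [funext (g2_eq r0)]
  exact ((hasDerivAt_cos ϑ).fun_add
    (((hasDerivAt_id' ϑ).const_mul 2).sin.const_mul r0)).congr_deriv (by ring)

def intraDiff (θ : Fin 3 → Fin 2 → ℝ) (τ : Fin 3) : ℝ := θ τ 1 - θ τ 0

lemma sub_add_one_eq_intraDiff_or_neg (θ : Fin 3 → Fin 2 → ℝ) (σ : Fin 3) (k : Fin 2) :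
    θ σ (k + 1) - θ σ k = intraDiff θ σ ∨ θ σ (k + 1) - θ σ k = -intraDiff θ σ := by
  fin_cases k
  · exact .inl rfl
  · exact .inr (neg_sub _ _).symm

lemma kuramotoH_apply (ω K r0 : ℝ) (θ : Fin 3 → Fin 2 → ℝ) (σ : Fin 3) (k : Fin 2) :
    kuramotoH ω K r0 θ σ k = ω + g2 r0 (θ σ (k + 1) - θ σ k)
      + K / 2 * sin (θ σ (k + 1) - θ σ k)
        * (cos (intraDiff θ (σ - 1)) - cos (intraDiff θ (σ + 1))) := by
  simp only [kuramotoH, G4_eq, intraDiff]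
  ring

lemma differentiable_kuramotoH (ω K r0 : ℝ) : Differentiable ℝ (kuramotoH ω K r0) := by
  refine differentiable_pi.mpr fun σ => differentiable_pi.mpr fun k => ?_
  unfold kuramotoH g2 G4 g4
  fun_prop

lemma hasDerivAt_reduced_of_sin_eq_zero (ω K r0 : ℝ) {x y z : ℝ → ℝ} {x' y' z' t : ℝ}
    (hx : HasDerivAt x x' t) (hy : HasDerivAt y y' t) (hz : HasDerivAt z z' t)
    (hx0 : sin (x t) = 0) (hy0 : sin (y t) = 0) (hz0 : sin (z t) = 0) :
    HasDerivAt (fun s => ω + g2 r0 (x s) + K / 2 * sin (x s) * (cos (y s) - cos (z s)))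
      ((2 * r0 + K / 2 * cos (x t) * (cos (y t) - cos (z t))) * x') t := by
  have h := (((hasDerivAt_g2 r0 (x t)).comp t hx).const_add ω).fun_add
    ((hx.sin.const_mul (K / 2)).fun_mul (hy.cos.fun_sub hz.cos))
  refine h.congr_deriv ?_
  rw [cos_two_mul_eq_one_sub, hx0, hy0, hz0]
  ring

theorem hasLineDerivAt_kuramotoH_kuramotoN (ω K r0 : ℝ) {θ : Fin 3 → Fin 2 → ℝ}
    (hθ : ∀ τ, sin (intraDiff θ τ) = 0) (v : Fin 3 → ℝ) :
    HasLineDerivAt ℝ (kuramotoH ω K r0)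
      (kuramotoN fun σ => -(4 * r0 + K * cos (intraDiff θ σ)
        * (cos (intraDiff θ (σ - 1)) - cos (intraDiff θ (σ + 1)))) * v σ) θ (kuramotoN v) := by
  set w := kuramotoN v
  have hline (τ j) : HasDerivAt (fun t : ℝ => (θ + t • w) τ j) (w τ j) 0 := by
    simpa using ((hasDerivAt_id' (0 : ℝ)).mul_const (w τ j)).const_add (θ τ j)
  have hat0 : θ + (0 : ℝ) • w = θ := by simp
  rw [HasLineDerivAt, hasDerivAt_pi]; intro σ; rw [hasDerivAt_pi]; intro k
  simp only [kuramotoH_apply]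
  have hΔ : HasDerivAt (fun t : ℝ => (θ + t • w) σ (k + 1) - (θ + t • w) σ k)
      (w σ (k + 1) - w σ k) 0 := (hline σ (k + 1)).sub (hline σ k)
  have hgap (τ) : HasDerivAt (fun t : ℝ => intraDiff (θ + t • w) τ) (w τ 1 - w τ 0) 0 :=
    (hline τ 1).sub (hline τ 0)
  have hreduced := hasDerivAt_reduced_of_sin_eq_zero ω K r0 hΔ (hgap (σ - 1)) (hgap (σ + 1))
  simp only [hat0] at hreduced
  have hsin : sin (θ σ (k + 1) - θ σ k) = 0 := by
    rcases sub_add_one_eq_intraDiff_or_neg θ σ k with h | h <;> simp [h, hθ σ]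
  have hcos : cos (θ σ (k + 1) - θ σ k) = cos (intraDiff θ σ) := by
    rcases sub_add_one_eq_intraDiff_or_neg θ σ k with h | h <;> simp [h]
  refine (hreduced hsin (hθ _) (hθ _)).congr_deriv ?_
  rw [hcos]
  fin_cases k <;>
    simp only [Fin.zero_eta, Fin.mk_one, Fin.reduceAdd, zero_add, kuramotoN, one_ne_zero,
      ↓reduceIte, w] <;>
    ring

lemma intraDiff_ESSD_zero : intraDiff (ESSD 0) = ![0, 0, π] := by
  ext τ; fin_cases τ <;> simp [intraDiff, ESSD]

/-- The Floquet matrix of the torus SSD is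
`L^SSD = diag(−4r₀ + 2K, −4r₀ − 2K, −4r₀)`: with `θ₀ = E^SSD(0) = (0,0,0,0,0,π)`,
the Jacobian of `H` at `θ₀` satisfies `DH(θ₀)(N v) = N(L^SSD v)` for all `v ∈ ℝ³`. -/
theorem kuramoto_SSD_floquet (ω K r0 : ℝ) :
    ∀ v : Fin 3 → ℝ,
      (fderiv ℝ (kuramotoH ω K r0) (ESSD 0)) (kuramotoN v)
        = kuramotoN ![(-4 * r0 + 2 * K) * v 0, (-4 * r0 - 2 * K) * v 1, (-4 * r0) * v 2] := by
  intro v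
  have hsin : ∀ τ, sin (intraDiff (ESSD 0) τ) = 0 := by
    simp [intraDiff_ESSD_zero, Fin.forall_fin_succ]
  rw [← (differentiable_kuramotoH ω K r0 _).lineDeriv_eq_fderiv,
    (hasLineDerivAt_kuramotoH_kuramotoN ω K r0 hsin v).lineDeriv]
  congr 1
  ext σ
  fin_cases σ <;> simp only [Fin.isValue, Fin.reduceSub, Fin.reduceAdd, Fin.reduceFinMk] <;>
    simp only [intraDiff_ESSD_zero, Matrix.cons_val_zero, Matrix.cons_val_one,
      Matrix.cons_val_two, Matrix.head_cons, Matrix.tail_cons, cos_zero, cos_pi] <;>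
    ring
end

section
/- For the three-population Kuramoto model with biharmonic symmetry-breaking perturbation Z and Ω = (ω + 1, ω + 1, ω − 1), there exist smooth maps e₁ : ℝ³ → ℝ⁶ and f₁ : ℝ³ → ℝ³, both 2π-periodic in each coordinate, such that: (i) the infinitesimal conjugacy equation holds on SSD, i.e., for all φ ∈ ℝ³, (fderiv ℝ e₁ φ)(Ω) − (fderiv ℝ H (E^SSD(φ)))(e₁(φ)) + R(f₁(φ)) = Z(E^SSD(φ)); (ii) f₁ is in normal form, i.e., there is a function F : ℝ → ℝ³ with f₁(φ) = F(φ₂ − φ₁) for all φ (f₁ depends only on the resonant combination φ₂ − φ₁); and (iii) the third component of f₁ is constantly equal to 2 r sin(2β). -/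
open Real

/-- Biharmonic coupling function `h(ϑ) = sin(ϑ + α) + r sin(2(ϑ + β))`. -/
noncomputable def hpert (α β r ϑ : ℝ) : ℝ :=
  Real.sin (ϑ + α) + r * Real.sin (2 * (ϑ + β))

/-- The symmetry-breaking perturbation `Z_{σ,k}(θ) = Σ_{τ,j} h(θ_{τ,j} − θ_{σ,k})`. -/
noncomputable def kuramotoZ (α β r : ℝ) (θ : Fin 3 → Fin 2 → ℝ) : Fin 3 → Fin 2 → ℝ :=
  fun σ k => ∑ τ : Fin 3, ∑ j : Fin 2, hpert α β r (θ τ j - θ σ k)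

/-! ### Auxiliary derivative machinery -/

lemma hd_sin (c m : ℝ) : HasDerivAt (fun t : ℝ => Real.sin (c + m * t)) (m * Real.cos c) 0 := by
  have h : HasDerivAt (fun t : ℝ => c + m * t) m 0 := by
    simpa using ((hasDerivAt_id (0:ℝ)).const_mul m).const_add c
  simpa [mul_comm] using h.sin

lemma hd_cos (c m : ℝ) : HasDerivAt (fun t : ℝ => Real.cos (c + m * t)) (-(m * Real.sin c)) 0 := by
  have h : HasDerivAt (fun t : ℝ => c + m * t) m 0 := by
    simpa using ((hasDerivAt_id (0:ℝ)).const_mul m).const_add c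
  simpa [mul_comm] using h.cos

lemma HasDerivAt.congr_d {f : ℝ → ℝ} {d d' t : ℝ} (h : HasDerivAt f d t) (hd : d = d') :
    HasDerivAt f d' t := hd ▸ h

lemma fderiv_dir {E F : Type*} [NormedAddCommGroup E] [NormedSpace ℝ E]
    [NormedAddCommGroup F] [NormedSpace ℝ F]
    {f : E → F} {x v : E} {d : F} (hf : DifferentiableAt ℝ f x)
    (hd : HasDerivAt (fun t : ℝ => f (x + t • v)) d 0) : fderiv ℝ f x v = d := by
  have hline : HasDerivAt (fun t : ℝ => x + t • v) v 0 := by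
    simpa using ((hasDerivAt_id (0:ℝ)).smul_const v).const_add x
  have hf' : HasFDerivAt f (fderiv ℝ f x) (x + (0:ℝ) • v) := by
    simpa using hf.hasFDerivAt
  have h1 : HasDerivAt (fun t : ℝ => f (x + t • v)) (fderiv ℝ f x v) 0 := by
    exact hf'.comp_hasDerivAt 0 hline
  exact h1.unique hd

/-! ### Curve derivatives for the Kuramoto field -/

noncomputable def G4dirval (a b : Fin 2 → ℝ) (c mc : ℝ) : ℝ :=
  (1/4) * ((b 0 - b 0 + mc) * Real.cos (a 0 - a 0 + c + π)
    + (b 0 - b 1 + mc) * Real.cos (a 0 - a 1 + c + π)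
    + ((b 1 - b 0 + mc) * Real.cos (a 1 - a 0 + c + π)
    + (b 1 - b 1 + mc) * Real.cos (a 1 - a 1 + c + π)))

lemma G4_curve (a b : Fin 2 → ℝ) (c mc : ℝ) :
    HasDerivAt (fun t : ℝ => G4 (a + t • b) (c + mc * t)) (G4dirval a b c mc) 0 := by
  have main : HasDerivAt (fun t : ℝ =>
      (1/4) * (Real.sin ((a 0 - a 0 + c + π) + (b 0 - b 0 + mc) * t)
        + Real.sin ((a 0 - a 1 + c + π) + (b 0 - b 1 + mc) * t)
        + (Real.sin ((a 1 - a 0 + c + π) + (b 1 - b 0 + mc) * t)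
        + Real.sin ((a 1 - a 1 + c + π) + (b 1 - b 1 + mc) * t))))
      (G4dirval a b c mc) 0 :=
    ((((hd_sin _ _).add (hd_sin _ _)).add ((hd_sin _ _).add (hd_sin _ _))).const_mul
      (1/4)).congr_d (by unfold G4dirval; ring)
  have hfun : (fun t : ℝ => G4 (a + t • b) (c + mc * t)) = (fun t : ℝ =>
      (1/4) * (Real.sin ((a 0 - a 0 + c + π) + (b 0 - b 0 + mc) * t)
        + Real.sin ((a 0 - a 1 + c + π) + (b 0 - b 1 + mc) * t)
        + (Real.sin ((a 1 - a 0 + c + π) + (b 1 - b 0 + mc) * t)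
        + Real.sin ((a 1 - a 1 + c + π) + (b 1 - b 1 + mc) * t)))) := by
    funext t
    simp only [G4, g4, Fin.sum_univ_two, Pi.add_apply, Pi.smul_apply, smul_eq_mul]
    ring_nf
  rw [hfun]; exact main

lemma g2_curve (r0 c mc : ℝ) :
    HasDerivAt (fun t : ℝ => g2 r0 (c + mc * t))
      (mc * Real.cos (c + π/2) - r0 * (2*mc * Real.cos (2*(c + π/2)))) 0 := by
  have main : HasDerivAt (fun t : ℝ =>
      Real.sin ((c + π/2) + mc * t) - r0 * Real.sin ((2*(c + π/2)) + (2*mc) * t))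
      (mc * Real.cos (c + π/2) - r0 * (2*mc * Real.cos (2*(c + π/2)))) 0 :=
    ((hd_sin _ _).sub ((hd_sin _ _).const_mul r0)).congr_d (by ring)
  have hfun : (fun t : ℝ => g2 r0 (c + mc * t)) = (fun t : ℝ =>
      Real.sin ((c + π/2) + mc * t) - r0 * Real.sin ((2*(c + π/2)) + (2*mc) * t)) := by
    funext t; simp only [g2]; ring_nf
  rw [hfun]; exact main

noncomputable def Hdirval (K r0 : ℝ) (x v : Fin 3 → Fin 2 → ℝ) (σ : Fin 3) (k : Fin 2) : ℝ :=
  ((v σ (k+1) - v σ k) * Real.cos ((x σ (k+1) - x σ k) + π/2)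
   - r0 * (2*(v σ (k+1) - v σ k) * Real.cos (2*((x σ (k+1) - x σ k) + π/2))))
  - K * G4dirval (x (σ-1)) (v (σ-1)) (x σ (k+1) - x σ k) (v σ (k+1) - v σ k)
  + K * G4dirval (x (σ+1)) (v (σ+1)) (x σ (k+1) - x σ k) (v σ (k+1) - v σ k)

lemma H_curve (ω K r0 : ℝ) (x v : Fin 3 → Fin 2 → ℝ) (σ : Fin 3) (k : Fin 2) :
    HasDerivAt (fun t : ℝ => kuramotoH ω K r0 (x + t • v) σ k) (Hdirval K r0 x v σ k) 0 := by
  have main : HasDerivAt (fun t : ℝ =>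
      ω + g2 r0 ((x σ (k+1) - x σ k) + (v σ (k+1) - v σ k) * t)
        - K * G4 (x (σ-1) + t • v (σ-1)) ((x σ (k+1) - x σ k) + (v σ (k+1) - v σ k) * t)
        + K * G4 (x (σ+1) + t • v (σ+1)) ((x σ (k+1) - x σ k) + (v σ (k+1) - v σ k) * t))
      (Hdirval K r0 x v σ k) 0 :=
    ((((g2_curve r0 _ _).const_add ω).sub ((G4_curve _ _ _ _).const_mul K)).add
      ((G4_curve _ _ _ _).const_mul K)).congr_d (by unfold Hdirval; ring)
  have hfun : (fun t : ℝ => kuramotoH ω K r0 (x + t • v) σ k) = (fun t : ℝ =>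
      ω + g2 r0 ((x σ (k+1) - x σ k) + (v σ (k+1) - v σ k) * t)
        - K * G4 (x (σ-1) + t • v (σ-1)) ((x σ (k+1) - x σ k) + (v σ (k+1) - v σ k) * t)
        + K * G4 (x (σ+1) + t • v (σ+1)) ((x σ (k+1) - x σ k) + (v σ (k+1) - v σ k) * t)) := by
    funext t
    simp only [kuramotoH, Pi.add_apply, Pi.smul_apply, smul_eq_mul]
    ring_nf
  rw [hfun]; exact main

attribute [local fun_prop] Real.contDiff_sin Real.contDiff_cos

lemma kuramotoH_contDiff (ω K r0 : ℝ) : ContDiff ℝ (⊤ : ℕ∞) (kuramotoH ω K r0) := by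
  unfold kuramotoH g2 G4 g4
  apply contDiff_pi.2; intro σ; apply contDiff_pi.2; intro k
  simp only [Fin.sum_univ_two]
  fun_prop

/-! ### The explicit solution -/

noncomputable def eSym (β r u : ℝ) : ℝ := r/2 * Real.cos (2*(β - u))

noncomputable def eS2 (β r u v : ℝ) : ℝ :=
  -(r/2) * (Real.cos (2*(u+β)) + Real.cos (2*(v+β)))

noncomputable def eA2 (r0 α u v : ℝ) : ℝ :=
  (2*r0/(1+4*r0^2)) * (Real.sin (u+α) + Real.sin (v+α))
    - (1/(1+4*r0^2)) * (Real.cos (u+α) + Real.cos (v+α))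

noncomputable def EE (r0 α β r : ℝ) (u v : ℝ) : Fin 3 → Fin 2 → ℝ :=
  ![![eSym β r u, eSym β r u],
    ![eSym β r v, eSym β r v],
    ![eS2 β r u v + eA2 r0 α u v, eS2 β r u v - eA2 r0 α u v]]

noncomputable def myE (r0 α β r : ℝ) (φ : Fin 3 → ℝ) : Fin 3 → Fin 2 → ℝ :=
  EE r0 α β r (φ 0 - φ 2) (φ 1 - φ 2)

noncomputable def FF (α β r : ℝ) (w : ℝ) : Fin 3 → ℝ :=
  ![2 * hpert α β r 0 + 2 * hpert α β r w,
    2 * hpert α β r (-w) + 2 * hpert α β r 0,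
    2 * r * Real.sin (2*β)]

noncomputable def myF (α β r : ℝ) (φ : Fin 3 → ℝ) : Fin 3 → ℝ := FF α β r (φ 1 - φ 0)

/-! ### Periodicity lemmas -/

lemma eSym_per (β r u : ℝ) (n : ℤ) : eSym β r (u + n*(2*π)) = eSym β r u := by
  unfold eSym
  rw [show 2*(β - (u + (n:ℝ)*(2*π))) = 2*(β-u) + ((-2*n : ℤ):ℝ)*(2*π) by push_cast; ring,
    Real.cos_add_int_mul_two_pi]

lemma eS2_per (β r u v : ℝ) (nu nv : ℤ) :
    eS2 β r (u + nu*(2*π)) (v + nv*(2*π)) = eS2 β r u v := by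
  unfold eS2
  rw [show 2*((u + (nu:ℝ)*(2*π))+β) = 2*(u+β) + ((2*nu : ℤ):ℝ)*(2*π) by push_cast; ring,
    show 2*((v + (nv:ℝ)*(2*π))+β) = 2*(v+β) + ((2*nv : ℤ):ℝ)*(2*π) by push_cast; ring,
    Real.cos_add_int_mul_two_pi, Real.cos_add_int_mul_two_pi]

lemma eA2_per (r0 α u v : ℝ) (nu nv : ℤ) :
    eA2 r0 α (u + nu*(2*π)) (v + nv*(2*π)) = eA2 r0 α u v := by
  unfold eA2
  rw [show (u + (nu:ℝ)*(2*π))+α = (u+α) + (nu:ℝ)*(2*π) by ring,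
    show (v + (nv:ℝ)*(2*π))+α = (v+α) + (nv:ℝ)*(2*π) by ring,
    Real.sin_add_int_mul_two_pi, Real.sin_add_int_mul_two_pi,
    Real.cos_add_int_mul_two_pi, Real.cos_add_int_mul_two_pi]

lemma EE_per (r0 α β r u v : ℝ) (nu nv : ℤ) :
    EE r0 α β r (u + nu*(2*π)) (v + nv*(2*π)) = EE r0 α β r u v := by
  unfold EE
  rw [eSym_per β r u nu, eSym_per β r v nv, eS2_per β r u v nu nv, eA2_per r0 α u v nu nv]

lemma hpert_per (α β r w : ℝ) (n : ℤ) : hpert α β r (w + n*(2*π)) = hpert α β r w := by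
  unfold hpert
  rw [show (w + (n:ℝ)*(2*π))+α = (w+α) + (n:ℝ)*(2*π) by ring,
    show 2*((w + (n:ℝ)*(2*π))+β) = 2*(w+β) + ((2*n : ℤ):ℝ)*(2*π) by push_cast; ring,
    Real.sin_add_int_mul_two_pi, Real.sin_add_int_mul_two_pi]

lemma FF_per (α β r w : ℝ) (n : ℤ) : FF α β r (w + n*(2*π)) = FF α β r w := by
  unfold FF
  rw [hpert_per α β r w n,
    show -(w + (n:ℝ)*(2*π)) = (-w) + ((-n : ℤ):ℝ)*(2*π) by push_cast; ring,
    hpert_per α β r (-w) (-n)]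

/-! ### Curve derivatives for the solution components -/

lemma eSym_curve (β r u mu : ℝ) :
    HasDerivAt (fun t : ℝ => eSym β r (u + mu*t)) (r/2 * (2*mu * Real.sin (2*(β-u)))) 0 := by
  have main : HasDerivAt (fun t : ℝ => r/2 * Real.cos ((2*(β-u)) + (-(2*mu)) * t))
      (r/2 * (2*mu * Real.sin (2*(β-u)))) 0 :=
    ((hd_cos _ _).const_mul (r/2)).congr_d (by ring)
  have hfun : (fun t : ℝ => eSym β r (u + mu*t))
      = (fun t : ℝ => r/2 * Real.cos ((2*(β-u)) + (-(2*mu)) * t)) := by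
    funext t; simp only [eSym]; ring_nf
  rw [hfun]; exact main

lemma eS2_curve (β r u v mu mv : ℝ) :
    HasDerivAt (fun t : ℝ => eS2 β r (u + mu*t) (v + mv*t))
      (r/2 * (2*mu * Real.sin (2*(u+β)) + 2*mv * Real.sin (2*(v+β)))) 0 := by
  have main : HasDerivAt (fun t : ℝ =>
      -(r/2) * (Real.cos ((2*(u+β)) + (2*mu) * t) + Real.cos ((2*(v+β)) + (2*mv) * t)))
      (r/2 * (2*mu * Real.sin (2*(u+β)) + 2*mv * Real.sin (2*(v+β)))) 0 :=
    (((hd_cos _ _).add (hd_cos _ _)).const_mul (-(r/2))).congr_d (by ring)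
  have hfun : (fun t : ℝ => eS2 β r (u + mu*t) (v + mv*t)) = (fun t : ℝ =>
      -(r/2) * (Real.cos ((2*(u+β)) + (2*mu) * t) + Real.cos ((2*(v+β)) + (2*mv) * t))) := by
    funext t; simp only [eS2]; ring_nf
  rw [hfun]; exact main

lemma eA2_curve (r0 α u v mu mv : ℝ) :
    HasDerivAt (fun t : ℝ => eA2 r0 α (u + mu*t) (v + mv*t))
      ((2*r0/(1+4*r0^2)) * (mu * Real.cos (u+α) + mv * Real.cos (v+α))
        + (1/(1+4*r0^2)) * (mu * Real.sin (u+α) + mv * Real.sin (v+α))) 0 := by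
  have main : HasDerivAt (fun t : ℝ =>
      (2*r0/(1+4*r0^2)) * (Real.sin ((u+α) + mu * t) + Real.sin ((v+α) + mv * t))
        - (1/(1+4*r0^2)) * (Real.cos ((u+α) + mu * t) + Real.cos ((v+α) + mv * t)))
      ((2*r0/(1+4*r0^2)) * (mu * Real.cos (u+α) + mv * Real.cos (v+α))
        + (1/(1+4*r0^2)) * (mu * Real.sin (u+α) + mv * Real.sin (v+α))) 0 :=
    ((((hd_sin _ _).add (hd_sin _ _)).const_mul _).sub
      (((hd_cos _ _).add (hd_cos _ _)).const_mul _)).congr_d (by ring)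
  have hfun : (fun t : ℝ => eA2 r0 α (u + mu*t) (v + mv*t)) = (fun t : ℝ =>
      (2*r0/(1+4*r0^2)) * (Real.sin ((u+α) + mu * t) + Real.sin ((v+α) + mv * t))
        - (1/(1+4*r0^2)) * (Real.cos ((u+α) + mu * t) + Real.cos ((v+α) + mv * t))) := by
    funext t; simp only [eA2]; ring_nf
  rw [hfun]; exact main

-- main body fragment to append after defs
lemma myE_contDiff (r0 α β r : ℝ) : ContDiff ℝ (⊤ : ℕ∞) (myE r0 α β r) := by
  apply contDiff_pi.2; intro σ; apply contDiff_pi.2; intro k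
  fin_cases σ <;> fin_cases k <;> simp [myE, EE, eSym, eS2, eA2] <;> fun_prop

lemma myF_contDiff (α β r : ℝ) : ContDiff ℝ (⊤ : ℕ∞) (myF α β r) := by
  apply contDiff_pi.2; intro j
  fin_cases j <;> simp [myF, FF, hpert] <;> fun_prop

lemma EE_per_u (r0 α β r u v : ℝ) (nu : ℤ) :
    EE r0 α β r (u + nu*(2*π)) v = EE r0 α β r u v := by
  have h := EE_per r0 α β r u v nu 0
  rw [show v + ((0:ℤ):ℝ)*(2*π) = v by push_cast; ring] at h
  exact h

lemma EE_per_v (r0 α β r u v : ℝ) (nv : ℤ) :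
    EE r0 α β r u (v + nv*(2*π)) = EE r0 α β r u v := by
  have h := EE_per r0 α β r u v 0 nv
  rw [show u + ((0:ℤ):ℝ)*(2*π) = u by push_cast; ring] at h
  exact h

lemma myE_per (r0 α β r : ℝ) (φ : Fin 3 → ℝ) (i : Fin 3) :
    myE r0 α β r (Function.update φ i (φ i + 2 * π)) = myE r0 α β r φ := by
  fin_cases i <;> simp only [myE] <;> simp
  · rw [show φ 0 + 2*π - φ 2 = (φ 0 - φ 2) + ((1:ℤ):ℝ)*(2*π) by push_cast; ring,
      EE_per_u]
  · rw [show φ 1 + 2*π - φ 2 = (φ 1 - φ 2) + ((1:ℤ):ℝ)*(2*π) by push_cast; ring,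
      EE_per_v]
  · rw [show φ 0 - (φ 2 + 2*π) = (φ 0 - φ 2) + ((-1:ℤ):ℝ)*(2*π) by push_cast; ring,
      show φ 1 - (φ 2 + 2*π) = (φ 1 - φ 2) + ((-1:ℤ):ℝ)*(2*π) by push_cast; ring,
      EE_per]

lemma myF_per (α β r : ℝ) (φ : Fin 3 → ℝ) (i : Fin 3) :
    myF α β r (Function.update φ i (φ i + 2 * π)) = myF α β r φ := by
  fin_cases i <;> simp only [myF] <;> simp
  · rw [show φ 1 - (φ 0 + 2*π) = (φ 1 - φ 0) + ((-1:ℤ):ℝ)*(2*π) by push_cast; ring, FF_per]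
  · rw [show φ 1 + 2*π - φ 0 = (φ 1 - φ 0) + ((1:ℤ):ℝ)*(2*π) by push_cast; ring, FF_per]

/-! ### Main theorem -/

set_option maxHeartbeats 6000000 in
/-- For the three-population Kuramoto model with biharmonic
symmetry-breaking perturbation `Z` and `Ω = (ω+1, ω+1, ω−1)`, there exist smooth
`2π`-periodic maps `e₁ : ℝ³ → ℝ⁶`, `f₁ : ℝ³ → ℝ³` such that (i) the infinitesimal
conjugacy equation holds along SSD, (ii) `f₁` is in normal form, depending only on
the resonant combination `φ₂ − φ₁`, and (iii) the third component of `f₁` is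
constantly `2 r sin(2β)`. -/
theorem kuramoto_SSD_infinitesimal_conjugacy (ω K r0 α β r : ℝ) :
    ∃ (e₁ : (Fin 3 → ℝ) → (Fin 3 → Fin 2 → ℝ)) (f₁ : (Fin 3 → ℝ) → (Fin 3 → ℝ)),
      ContDiff ℝ (⊤ : ℕ∞) e₁ ∧ ContDiff ℝ (⊤ : ℕ∞) f₁ ∧
      (∀ (φ : Fin 3 → ℝ) (i : Fin 3), e₁ (Function.update φ i (φ i + 2 * π)) = e₁ φ) ∧
      (∀ (φ : Fin 3 → ℝ) (i : Fin 3), f₁ (Function.update φ i (φ i + 2 * π)) = f₁ φ) ∧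
      (∀ φ : Fin 3 → ℝ,
        (fderiv ℝ e₁ φ) ![ω + 1, ω + 1, ω - 1]
          - (fderiv ℝ (kuramotoH ω K r0) (ESSD φ)) (e₁ φ)
          + kuramotoR (f₁ φ)
          = kuramotoZ α β r (ESSD φ)) ∧
      (∃ F : ℝ → (Fin 3 → ℝ), ∀ φ : Fin 3 → ℝ, f₁ φ = F (φ 1 - φ 0)) ∧
      (∀ φ : Fin 3 → ℝ, f₁ φ 2 = 2 * r * Real.sin (2 * β)) := by
  refine ⟨myE r0 α β r, myF α β r, myE_contDiff r0 α β r, myF_contDiff α β r,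
    fun φ i => myE_per r0 α β r φ i, fun φ i => myF_per α β r φ i, ?_,
    ⟨FF α β r, fun φ => rfl⟩, fun φ => by simp [myF, FF]⟩
  intro φ
  have hE : fderiv ℝ (myE r0 α β r) φ ![ω + 1, ω + 1, ω - 1]
      = ![![r/2 * (2*2*Real.sin (2*(β-(φ 0 - φ 2)))), r/2 * (2*2*Real.sin (2*(β-(φ 0 - φ 2))))],
          ![r/2 * (2*2*Real.sin (2*(β-(φ 1 - φ 2)))), r/2 * (2*2*Real.sin (2*(β-(φ 1 - φ 2))))],
          ![r/2 * (2*2*Real.sin (2*((φ 0 - φ 2)+β)) + 2*2*Real.sin (2*((φ 1 - φ 2)+β)))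
              + ((2*r0/(1+4*r0^2)) * (2 * Real.cos ((φ 0 - φ 2)+α) + 2 * Real.cos ((φ 1 - φ 2)+α))
                 + (1/(1+4*r0^2)) * (2 * Real.sin ((φ 0 - φ 2)+α) + 2 * Real.sin ((φ 1 - φ 2)+α))),
            r/2 * (2*2*Real.sin (2*((φ 0 - φ 2)+β)) + 2*2*Real.sin (2*((φ 1 - φ 2)+β)))
              - ((2*r0/(1+4*r0^2)) * (2 * Real.cos ((φ 0 - φ 2)+α) + 2 * Real.cos ((φ 1 - φ 2)+α))
                 + (1/(1+4*r0^2)) * (2 * Real.sin ((φ 0 - φ 2)+α) + 2 * Real.sin ((φ 1 - φ 2)+α)))]] := by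
    apply fderiv_dir ((myE_contDiff r0 α β r).differentiable (by simp) φ)
    apply hasDerivAt_pi.2; intro σ; fin_cases σ
    · show HasDerivAt (fun t : ℝ => myE r0 α β r (φ + t • ![ω+1,ω+1,ω-1]) 0)
        ![r/2 * (2*2*Real.sin (2*(β-(φ 0 - φ 2)))), r/2 * (2*2*Real.sin (2*(β-(φ 0 - φ 2))))] 0
      apply hasDerivAt_pi.2; intro k; fin_cases k
      · show HasDerivAt (fun t : ℝ => myE r0 α β r (φ + t • ![ω+1,ω+1,ω-1]) 0 0)
          (r/2 * (2*2*Real.sin (2*(β-(φ 0 - φ 2))))) 0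
        rw [show (fun t : ℝ => myE r0 α β r (φ + t • ![ω+1,ω+1,ω-1]) 0 0)
          = (fun t : ℝ => eSym β r ((φ 0 - φ 2) + 2*t)) from by
            funext t; simp [myE, EE]; ring_nf]
        exact eSym_curve β r (φ 0 - φ 2) 2
      · show HasDerivAt (fun t : ℝ => myE r0 α β r (φ + t • ![ω+1,ω+1,ω-1]) 0 1)
          (r/2 * (2*2*Real.sin (2*(β-(φ 0 - φ 2))))) 0
        rw [show (fun t : ℝ => myE r0 α β r (φ + t • ![ω+1,ω+1,ω-1]) 0 1)
          = (fun t : ℝ => eSym β r ((φ 0 - φ 2) + 2*t)) from by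
            funext t; simp [myE, EE]; ring_nf]
        exact eSym_curve β r (φ 0 - φ 2) 2
    · show HasDerivAt (fun t : ℝ => myE r0 α β r (φ + t • ![ω+1,ω+1,ω-1]) 1)
        ![r/2 * (2*2*Real.sin (2*(β-(φ 1 - φ 2)))), r/2 * (2*2*Real.sin (2*(β-(φ 1 - φ 2))))] 0
      apply hasDerivAt_pi.2; intro k; fin_cases k
      · show HasDerivAt (fun t : ℝ => myE r0 α β r (φ + t • ![ω+1,ω+1,ω-1]) 1 0)
          (r/2 * (2*2*Real.sin (2*(β-(φ 1 - φ 2))))) 0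
        rw [show (fun t : ℝ => myE r0 α β r (φ + t • ![ω+1,ω+1,ω-1]) 1 0)
          = (fun t : ℝ => eSym β r ((φ 1 - φ 2) + 2*t)) from by
            funext t; simp [myE, EE]; ring_nf]
        exact eSym_curve β r (φ 1 - φ 2) 2
      · show HasDerivAt (fun t : ℝ => myE r0 α β r (φ + t • ![ω+1,ω+1,ω-1]) 1 1)
          (r/2 * (2*2*Real.sin (2*(β-(φ 1 - φ 2))))) 0
        rw [show (fun t : ℝ => myE r0 α β r (φ + t • ![ω+1,ω+1,ω-1]) 1 1)
          = (fun t : ℝ => eSym β r ((φ 1 - φ 2) + 2*t)) from by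
            funext t; simp [myE, EE]; ring_nf]
        exact eSym_curve β r (φ 1 - φ 2) 2
    · show HasDerivAt (fun t : ℝ => myE r0 α β r (φ + t • ![ω+1,ω+1,ω-1]) 2)
        ![r/2 * (2*2*Real.sin (2*((φ 0 - φ 2)+β)) + 2*2*Real.sin (2*((φ 1 - φ 2)+β)))
            + ((2*r0/(1+4*r0^2)) * (2 * Real.cos ((φ 0 - φ 2)+α) + 2 * Real.cos ((φ 1 - φ 2)+α))
               + (1/(1+4*r0^2)) * (2 * Real.sin ((φ 0 - φ 2)+α) + 2 * Real.sin ((φ 1 - φ 2)+α))),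
          r/2 * (2*2*Real.sin (2*((φ 0 - φ 2)+β)) + 2*2*Real.sin (2*((φ 1 - φ 2)+β)))
            - ((2*r0/(1+4*r0^2)) * (2 * Real.cos ((φ 0 - φ 2)+α) + 2 * Real.cos ((φ 1 - φ 2)+α))
               + (1/(1+4*r0^2)) * (2 * Real.sin ((φ 0 - φ 2)+α) + 2 * Real.sin ((φ 1 - φ 2)+α)))] 0
      apply hasDerivAt_pi.2; intro k; fin_cases k
      · show HasDerivAt (fun t : ℝ => myE r0 α β r (φ + t • ![ω+1,ω+1,ω-1]) 2 0)
          (r/2 * (2*2*Real.sin (2*((φ 0 - φ 2)+β)) + 2*2*Real.sin (2*((φ 1 - φ 2)+β)))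
            + ((2*r0/(1+4*r0^2)) * (2 * Real.cos ((φ 0 - φ 2)+α) + 2 * Real.cos ((φ 1 - φ 2)+α))
               + (1/(1+4*r0^2)) * (2 * Real.sin ((φ 0 - φ 2)+α) + 2 * Real.sin ((φ 1 - φ 2)+α)))) 0
        rw [show (fun t : ℝ => myE r0 α β r (φ + t • ![ω+1,ω+1,ω-1]) 2 0)
          = (fun t : ℝ => eS2 β r ((φ 0 - φ 2) + 2*t) ((φ 1 - φ 2) + 2*t)
              + eA2 r0 α ((φ 0 - φ 2) + 2*t) ((φ 1 - φ 2) + 2*t)) from by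
            funext t; simp [myE, EE]; ring_nf]
        exact (eS2_curve β r (φ 0 - φ 2) (φ 1 - φ 2) 2 2).add
          (eA2_curve r0 α (φ 0 - φ 2) (φ 1 - φ 2) 2 2)
      · show HasDerivAt (fun t : ℝ => myE r0 α β r (φ + t • ![ω+1,ω+1,ω-1]) 2 1)
          (r/2 * (2*2*Real.sin (2*((φ 0 - φ 2)+β)) + 2*2*Real.sin (2*((φ 1 - φ 2)+β)))
            - ((2*r0/(1+4*r0^2)) * (2 * Real.cos ((φ 0 - φ 2)+α) + 2 * Real.cos ((φ 1 - φ 2)+α))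
               + (1/(1+4*r0^2)) * (2 * Real.sin ((φ 0 - φ 2)+α) + 2 * Real.sin ((φ 1 - φ 2)+α)))) 0
        rw [show (fun t : ℝ => myE r0 α β r (φ + t • ![ω+1,ω+1,ω-1]) 2 1)
          = (fun t : ℝ => eS2 β r ((φ 0 - φ 2) + 2*t) ((φ 1 - φ 2) + 2*t)
              - eA2 r0 α ((φ 0 - φ 2) + 2*t) ((φ 1 - φ 2) + 2*t)) from by
            funext t; simp [myE, EE]; ring_nf]
        exact (eS2_curve β r (φ 0 - φ 2) (φ 1 - φ 2) 2 2).sub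
          (eA2_curve r0 α (φ 0 - φ 2) (φ 1 - φ 2) 2 2)
  have hH : fderiv ℝ (kuramotoH ω K r0) (ESSD φ) (myE r0 α β r φ)
      = fun σ k => Hdirval K r0 (ESSD φ) (myE r0 α β r φ) σ k :=
    fderiv_dir ((kuramotoH_contDiff ω K r0).differentiable (by simp) _)
      (hasDerivAt_pi.2 fun σ => hasDerivAt_pi.2 fun k => H_curve ω K r0 _ _ σ k)
  rw [hE, hH]
  funext σ k
  fin_cases σ <;> fin_cases k
  · simp only [show (⟨0, by omega⟩ : Fin 3) = 0 from rfl, show (⟨1, by omega⟩ : Fin 3) = 1 from rfl,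
      show (⟨2, by omega⟩ : Fin 3) = 2 from rfl, show (⟨0, by omega⟩ : Fin 2) = 0 from rfl,
      show (⟨1, by omega⟩ : Fin 2) = 1 from rfl,
      Fin.isValue, Fin.mk_zero, Fin.mk_one, Pi.sub_apply, Pi.add_apply,
      Hdirval, G4dirval, kuramotoZ, kuramotoR, myF, FF, hpert, myE, EE, eSym, eS2, eA2, ESSD,
      Fin.sum_univ_three, Fin.sum_univ_two,
      Matrix.cons_val_zero, Matrix.cons_val_one, Matrix.head_cons,
      Matrix.cons_val_two, Matrix.tail_cons,
      show (0:Fin 3) - 1 = 2 from rfl, show (0:Fin 3) + 1 = 1 from rfl,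
      show (1:Fin 3) - 1 = 0 from rfl, show (1:Fin 3) + 1 = 2 from rfl,
      show (2:Fin 3) - 1 = 1 from rfl, show (2:Fin 3) + 1 = 0 from rfl,
      show (0:Fin 2) + 1 = 1 from rfl, show (1:Fin 2) + 1 = 0 from rfl]
    norm_num [Fin.ext_iff]
    simp only [Real.sin_add, Real.cos_add, Real.sin_sub, Real.cos_sub,
      Real.sin_two_mul, Real.cos_two_mul, Real.sin_pi, Real.cos_pi,
      Real.sin_pi_div_two, Real.cos_pi_div_two, Real.sin_zero, Real.cos_zero]
    field_simp
    ring
  · simp only [show (⟨0, by omega⟩ : Fin 3) = 0 from rfl, show (⟨1, by omega⟩ : Fin 3) = 1 from rfl,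
      show (⟨2, by omega⟩ : Fin 3) = 2 from rfl, show (⟨0, by omega⟩ : Fin 2) = 0 from rfl,
      show (⟨1, by omega⟩ : Fin 2) = 1 from rfl,
      Fin.isValue, Fin.mk_zero, Fin.mk_one, Pi.sub_apply, Pi.add_apply,
      Hdirval, G4dirval, kuramotoZ, kuramotoR, myF, FF, hpert, myE, EE, eSym, eS2, eA2, ESSD,
      Fin.sum_univ_three, Fin.sum_univ_two,
      Matrix.cons_val_zero, Matrix.cons_val_one, Matrix.head_cons,
      Matrix.cons_val_two, Matrix.tail_cons,
      show (0:Fin 3) - 1 = 2 from rfl, show (0:Fin 3) + 1 = 1 from rfl,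
      show (1:Fin 3) - 1 = 0 from rfl, show (1:Fin 3) + 1 = 2 from rfl,
      show (2:Fin 3) - 1 = 1 from rfl, show (2:Fin 3) + 1 = 0 from rfl,
      show (0:Fin 2) + 1 = 1 from rfl, show (1:Fin 2) + 1 = 0 from rfl]
    norm_num [Fin.ext_iff]
    simp only [Real.sin_add, Real.cos_add, Real.sin_sub, Real.cos_sub,
      Real.sin_two_mul, Real.cos_two_mul, Real.sin_pi, Real.cos_pi,
      Real.sin_pi_div_two, Real.cos_pi_div_two, Real.sin_zero, Real.cos_zero]
    field_simp
    ring
  · simp only [show (⟨0, by omega⟩ : Fin 3) = 0 from rfl, show (⟨1, by omega⟩ : Fin 3) = 1 from rfl,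
      show (⟨2, by omega⟩ : Fin 3) = 2 from rfl, show (⟨0, by omega⟩ : Fin 2) = 0 from rfl,
      show (⟨1, by omega⟩ : Fin 2) = 1 from rfl,
      Fin.isValue, Fin.mk_zero, Fin.mk_one, Pi.sub_apply, Pi.add_apply,
      Hdirval, G4dirval, kuramotoZ, kuramotoR, myF, FF, hpert, myE, EE, eSym, eS2, eA2, ESSD,
      Fin.sum_univ_three, Fin.sum_univ_two,
      Matrix.cons_val_zero, Matrix.cons_val_one, Matrix.head_cons,
      Matrix.cons_val_two, Matrix.tail_cons,
      show (0:Fin 3) - 1 = 2 from rfl, show (0:Fin 3) + 1 = 1 from rfl,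
      show (1:Fin 3) - 1 = 0 from rfl, show (1:Fin 3) + 1 = 2 from rfl,
      show (2:Fin 3) - 1 = 1 from rfl, show (2:Fin 3) + 1 = 0 from rfl,
      show (0:Fin 2) + 1 = 1 from rfl, show (1:Fin 2) + 1 = 0 from rfl]
    norm_num [Fin.ext_iff]
    simp only [Real.sin_add, Real.cos_add, Real.sin_sub, Real.cos_sub,
      Real.sin_two_mul, Real.cos_two_mul, Real.sin_pi, Real.cos_pi,
      Real.sin_pi_div_two, Real.cos_pi_div_two, Real.sin_zero, Real.cos_zero]
    field_simp
    ring
  · simp only [show (⟨0, by omega⟩ : Fin 3) = 0 from rfl, show (⟨1, by omega⟩ : Fin 3) = 1 from rfl,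
      show (⟨2, by omega⟩ : Fin 3) = 2 from rfl, show (⟨0, by omega⟩ : Fin 2) = 0 from rfl,
      show (⟨1, by omega⟩ : Fin 2) = 1 from rfl,
      Fin.isValue, Fin.mk_zero, Fin.mk_one, Pi.sub_apply, Pi.add_apply,
      Hdirval, G4dirval, kuramotoZ, kuramotoR, myF, FF, hpert, myE, EE, eSym, eS2, eA2, ESSD,
      Fin.sum_univ_three, Fin.sum_univ_two,
      Matrix.cons_val_zero, Matrix.cons_val_one, Matrix.head_cons,
      Matrix.cons_val_two, Matrix.tail_cons,
      show (0:Fin 3) - 1 = 2 from rfl, show (0:Fin 3) + 1 = 1 from rfl,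
      show (1:Fin 3) - 1 = 0 from rfl, show (1:Fin 3) + 1 = 2 from rfl,
      show (2:Fin 3) - 1 = 1 from rfl, show (2:Fin 3) + 1 = 0 from rfl,
      show (0:Fin 2) + 1 = 1 from rfl, show (1:Fin 2) + 1 = 0 from rfl]
    norm_num [Fin.ext_iff]
    simp only [Real.sin_add, Real.cos_add, Real.sin_sub, Real.cos_sub,
      Real.sin_two_mul, Real.cos_two_mul, Real.sin_pi, Real.cos_pi,
      Real.sin_pi_div_two, Real.cos_pi_div_two, Real.sin_zero, Real.cos_zero]
    field_simp
    ring
  · simp only [show (⟨0, by omega⟩ : Fin 3) = 0 from rfl, show (⟨1, by omega⟩ : Fin 3) = 1 from rfl,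
      show (⟨2, by omega⟩ : Fin 3) = 2 from rfl, show (⟨0, by omega⟩ : Fin 2) = 0 from rfl,
      show (⟨1, by omega⟩ : Fin 2) = 1 from rfl,
      Fin.isValue, Fin.mk_zero, Fin.mk_one, Pi.sub_apply, Pi.add_apply,
      Hdirval, G4dirval, kuramotoZ, kuramotoR, myF, FF, hpert, myE, EE, eSym, eS2, eA2, ESSD,
      Fin.sum_univ_three, Fin.sum_univ_two,
      Matrix.cons_val_zero, Matrix.cons_val_one, Matrix.head_cons,
      Matrix.cons_val_two, Matrix.tail_cons,
      show (0:Fin 3) - 1 = 2 from rfl, show (0:Fin 3) + 1 = 1 from rfl,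
      show (1:Fin 3) - 1 = 0 from rfl, show (1:Fin 3) + 1 = 2 from rfl,
      show (2:Fin 3) - 1 = 1 from rfl, show (2:Fin 3) + 1 = 0 from rfl,
      show (0:Fin 2) + 1 = 1 from rfl, show (1:Fin 2) + 1 = 0 from rfl]
    norm_num [Fin.ext_iff]
    simp only [Real.sin_add, Real.cos_add, Real.sin_sub, Real.cos_sub,
      Real.sin_two_mul, Real.cos_two_mul, Real.sin_pi, Real.cos_pi,
      Real.sin_pi_div_two, Real.cos_pi_div_two, Real.sin_zero, Real.cos_zero]
    field_simp
    ring
  · simp only [show (⟨0, by omega⟩ : Fin 3) = 0 from rfl, show (⟨1, by omega⟩ : Fin 3) = 1 from rfl,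
      show (⟨2, by omega⟩ : Fin 3) = 2 from rfl, show (⟨0, by omega⟩ : Fin 2) = 0 from rfl,
      show (⟨1, by omega⟩ : Fin 2) = 1 from rfl,
      Fin.isValue, Fin.mk_zero, Fin.mk_one, Pi.sub_apply, Pi.add_apply,
      Hdirval, G4dirval, kuramotoZ, kuramotoR, myF, FF, hpert, myE, EE, eSym, eS2, eA2, ESSD,
      Fin.sum_univ_three, Fin.sum_univ_two,
      Matrix.cons_val_zero, Matrix.cons_val_one, Matrix.head_cons,
      Matrix.cons_val_two, Matrix.tail_cons,
      show (0:Fin 3) - 1 = 2 from rfl, show (0:Fin 3) + 1 = 1 from rfl,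
      show (1:Fin 3) - 1 = 0 from rfl, show (1:Fin 3) + 1 = 2 from rfl,
      show (2:Fin 3) - 1 = 1 from rfl, show (2:Fin 3) + 1 = 0 from rfl,
      show (0:Fin 2) + 1 = 1 from rfl, show (1:Fin 2) + 1 = 0 from rfl]
    norm_num [Fin.ext_iff]
    simp only [Real.sin_add, Real.cos_add, Real.sin_sub, Real.cos_sub,
      Real.sin_two_mul, Real.cos_two_mul, Real.sin_pi, Real.cos_pi,
      Real.sin_pi_div_two, Real.cos_pi_div_two, Real.sin_zero, Real.cos_zero, Real.sin_neg, Real.cos_neg]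
    field_simp
    ring
end
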